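/- (Second exchange lemma) Let A be a coherent commutative ring, E a finitely presented A-module, and (b₁, …, bₘ) an E-regular sequence contained in the Jacobson radical Rad(A). Then every permutation of (b₁, …, bₘ) is also an E-regular sequence. -/

import Mathlib

/-- A commutative ring is coherent when kernels of linear forms on `Aⁿ` are
finitely generated (equivalently, finitely generated ideals are finitely presented). -/
def IsCoherentRing (A : Type*) [CommRing A] : Prop :=
  ∀ (n : ℕ) (f : (Fin n → A) →ₗ[A] A), (LinearMap.ker f).FG

/-- `(b₁, …, bₙ)` is an `E`-regular sequence: each `bᵢ` is regular on
`E/(b₁E + ⋯ + b_{i-1}E)`. -/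
def IsRegSeqOn (A : Type*) [CommRing A] (E : Type*) [AddCommGroup E] [Module A E]
    {n : ℕ} (b : Fin n → A) : Prop :=
  ∀ i : Fin n, ∀ x : E,
    b i • x ∈ Ideal.span (b '' {j | j < i}) • (⊤ : Submodule A E) →
    x ∈ Ideal.span (b '' {j | j < i}) • (⊤ : Submodule A E)

/-! Permutations are generated by adjacent transpositions, and a weakly regular pair `a, b` on
a module `M` stays regular after swapping as soon as the `b`-torsion `K` of `M` vanishes;
regularity of the pair already gives `K = a • K`. Over a coherent ring `K` is the kernel of
multiplication by `b` on a finitely presented module (a quotient of `E` by a finitely generated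
ideal), hence finitely generated, and Nakayama's lemma with `a ∈ Rad(A)` gives `K = 0`. -/

open Submodule LinearMap

lemma LinearMap.fg_ker_of_fg_ker_comp {R M N P : Type*} [Ring R] [AddCommGroup M] [Module R M]
    [AddCommGroup N] [Module R N] [AddCommGroup P] [Module R P] {p : P →ₗ[R] M}
    (hp : Function.Surjective p) (f : M →ₗ[R] N) (h : (ker (f ∘ₗ p)).FG) : (ker f).FG := by
  rw [ker_comp] at h
  simpa [map_comap_eq_of_surjective hp] using h.map p

lemma Module.finitePresentation_quotient {R M : Type*} [CommRing R] [AddCommGroup M]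
    [Module R M] [Module.FinitePresentation R M] {N : Submodule R M} (hN : N.FG) :
    Module.FinitePresentation R (M ⧸ N) :=
  Module.finitePresentation_of_surjective N.mkQ N.mkQ_surjective (by rwa [ker_mkQ])

namespace IsCoherentRing

variable {A : Type*} [CommRing A]

lemma fg_ker_of_linearForm (hcoh : IsCoherentRing A) {M : Type*} [AddCommGroup M] [Module A M]
    [Module.Finite A M] (f : M →ₗ[A] A) : (ker f).FG := by
  obtain ⟨n, p, hp⟩ := Module.Finite.exists_fin' A M
  exact fg_ker_of_fg_ker_comp hp f (hcoh n _)

lemma fg_ker_of_finite (hcoh : IsCoherentRing A) {M : Type*} [AddCommGroup M] [Module A M]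
    [Module.Finite A M] {k : ℕ} (f : M →ₗ[A] Fin k → A) : (ker f).FG := by
  induction k generalizing M with
  | zero => simpa [Subsingleton.elim f 0] using Module.Finite.fg_top
  | succ k ih =>
    set K := ker (proj 0 ∘ₗ f)
    have : Module.Finite A K := Module.Finite.iff_fg.mpr (fg_ker_of_linearForm hcoh _)
    have hker : ker f = (ker ((funLeft A A Fin.succ ∘ₗ f) ∘ₗ K.subtype)).map K.subtype := by
      rw [ker_comp, map_comap_subtype]
      ext x
      simp [K, funext_iff, Fin.forall_fin_succ]
    rw [hker]
    exact (ih _).map _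

lemma fg_comap (hcoh : IsCoherentRing A) {M : Type*} [AddCommGroup M] [Module A M]
    [Module.Finite A M] {k : ℕ} (g : M →ₗ[A] Fin k → A) {X : Submodule A (Fin k → A)}
    (hX : X.FG) : (X.comap g).FG := by
  have : Module.Finite A X := Module.Finite.iff_fg.mpr hX
  have hcomap : X.comap g = (ker (g.coprod (-X.subtype))).map (fst A M X) := by
    ext x
    simp [← sub_eq_add_neg, sub_eq_zero]
  rw [hcomap]
  exact (fg_ker_of_finite hcoh _).map _

theorem fg_ker (hcoh : IsCoherentRing A) {M N : Type*} [AddCommGroup M] [Module A M]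
    [AddCommGroup N] [Module A N] [Module.Finite A M] [Module.FinitePresentation A N]
    (f : M →ₗ[A] N) : (ker f).FG := by
  obtain ⟨n, p, hp⟩ := Module.Finite.exists_fin' A N
  obtain ⟨m, q, hq⟩ := Module.Finite.exists_fin' A M
  obtain ⟨g, hg⟩ := Module.projective_lifting_property p (f ∘ₗ q) hp
  refine fg_ker_of_fg_ker_comp hq f ?_
  rw [← hg, ker_comp]
  exact fg_comap hcoh g (Module.FinitePresentation.fg_ker p hp)

end IsCoherentRing

namespace RingTheory.Sequence

variable {A M : Type*} [CommRing A] [AddCommGroup M] [Module A M]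

theorem IsWeaklyRegular.of_perm_of_isCoherentRing (hcoh : IsCoherentRing A)
    [Module.FinitePresentation A M] {rs rs' : List A} (h1 : IsWeaklyRegular M rs)
    (h2 : rs.Perm rs') (h3 : ∀ r ∈ rs, r ∈ (⊥ : Ideal A).jacobson) : IsWeaklyRegular M rs' :=
  h1.prototype_perm h2 fun a b rs'' hsub hK => by
    have : Module.FinitePresentation A (M ⧸ (Ideal.ofList rs'' • ⊤ : Submodule A M)) :=
      Module.finitePresentation_quotient <|
        Submodule.FG.smul (Submodule.fg_span rs''.finite_toSet) Module.Finite.fg_top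
    exact eq_bot_of_eq_pointwise_smul_of_mem_jacobson_annihilator (hcoh.fg_ker _) hK
      (Ideal.jacobson_mono bot_le (h3 a (hsub.subset List.mem_cons_self)))

theorem isWeaklyRegular_ofFn_iff {n : ℕ} (b : Fin n → A) :
    IsWeaklyRegular M (List.ofFn b) ↔ IsRegSeqOn A M b := by
  rw [isWeaklyRegular_iff_Fin, IsRegSeqOn]
  refine (finCongr List.length_ofFn).forall_congr fun i => ?_
  have hspan : Ideal.ofList ((List.ofFn b).take i) =
      Ideal.span (b '' {j | j < finCongr List.length_ofFn i}) := by
    refine congrArg Ideal.span (Set.ext fun r => ?_)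
    simp only [List.mem_take_iff_getElem, List.getElem_ofFn, List.length_ofFn, lt_inf_iff,
      Set.mem_ofPred_eq, finCongr_apply, Fin.lt_def, Fin.val_cast, Set.mem_image]
    exact ⟨fun ⟨j, ⟨hji, hjn⟩, hj⟩ => ⟨⟨j, hjn⟩, hji, hj⟩,
      fun ⟨j, hji, hj⟩ => ⟨j, ⟨hji, j.isLt⟩, hj⟩⟩
  rw [isSMulRegular_quotient_iff_mem_of_smul_mem, hspan, Fin.getElem_fin, List.getElem_ofFn]
  rfl

end RingTheory.Sequence

/-- Second exchange lemma: over a coherent ring, an `E`-regular sequence contained in the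
Jacobson radical, on a finitely presented module `E`, stays `E`-regular after any permutation. -/
theorem stmt9 {A : Type*} [CommRing A] {E : Type*} [AddCommGroup E] [Module A E]
    (hcoh : IsCoherentRing A) (hfp : Module.FinitePresentation A E)
    {m : ℕ} (b : Fin m → A) (hrad : ∀ i, b i ∈ (⊥ : Ideal A).jacobson)
    (hreg : IsRegSeqOn A E b) (σ : Equiv.Perm (Fin m)) :
    IsRegSeqOn A E (b ∘ σ) := by
  rw [← RingTheory.Sequence.isWeaklyRegular_ofFn_iff] at hreg ⊢
  refine hreg.of_perm_of_isCoherentRing hcoh (σ.ofFn_comp_perm b).symm ?_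
  simpa [List.mem_ofFn] using hrad
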